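/- arXiv:2309.16129 — 3 statements merged into one kernel-verified Lean document; each statement's English description precedes it below -/
import Mathlib

section
/- Under Conditions A1–A3, the mean embedding of the counterfactual outcome admits the doubly robust representation: E[ξ(Y¹)] = E[(A/π(X))·(ξ(Y) − β(X)) + β(X)], where both sides are Bochner integrals in H. -/
/-!
Since `π(X) = E[A | X]`, the inverse-propensity weight `A / π(X)` integrates like `1` over every
set of `σ(X)`, and by Condition A2 also over every set of `σ(Y⁰, Y¹)`; hence
`E[(A / π(X)) • f] = E[f]` both for `f = ξ(Y¹)` and for `f = β(X)`. Since `A • ξ(Y) = A • ξ(Y¹)`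
by A1, the right-hand side is `E[ξ(Y¹)] - E[β(X)] + E[β(X)]`.
-/

open MeasureTheory Filter

section

variable {Ω : Type*} {m mΩ : MeasurableSpace Ω} {P : Measure Ω}

theorem integrable_mul_inv_of_le {a g : Ω → ℝ} (ha : Integrable a P)
    (hg : AEMeasurable g P) {ε : ℝ} (hε : 0 < ε) (hgε : ∀ᵐ ω ∂P, ε ≤ g ω) :
    Integrable (fun ω => a ω * (g ω)⁻¹) P := by
  refine ha.mul_bdd (c := ε⁻¹) hg.inv.aestronglyMeasurable ?_
  filter_upwards [hgε] with ω hω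
  rw [norm_inv, Real.norm_of_nonneg (hε.le.trans hω)]
  exact inv_anti₀ hε hω

theorem integrable_div_smul_of_le {E : Type*} [NormedAddCommGroup E] [NormedSpace ℝ E]
    {a g : Ω → ℝ} {f : Ω → E} (hf : Integrable f P) (ha : AEMeasurable a P)
    (ha_le : ∀ ω, ‖a ω‖ ≤ 1) (hg : AEMeasurable g P) {ε : ℝ} (hε : 0 < ε)
    (hgε : ∀ᵐ ω ∂P, ε ≤ g ω) :
    Integrable (fun ω => (a ω / g ω) • f ω) P := by
  refine hf.bdd_smul ε⁻¹ (ha.div hg).aestronglyMeasurable ?_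
  filter_upwards [hgε] with ω hω
  rw [norm_div, Real.norm_of_nonneg (hε.le.trans hω), ← one_div]
  exact div_le_div₀ zero_le_one (ha_le ω) hε hω

theorem integral_smul_sub_add_eq_of_integral_smul_eq {E : Type*} [NormedAddCommGroup E]
    [NormedSpace ℝ E] {w : Ω → ℝ} {f b : Ω → E} (hwf : Integrable (fun ω => w ω • f ω) P)
    (hwb : Integrable (fun ω => w ω • b ω) P) (hb : Integrable b P)
    (hwf_eq : ∫ ω, w ω • f ω ∂P = ∫ ω, f ω ∂P) (hwb_eq : ∫ ω, w ω • b ω ∂P = ∫ ω, b ω ∂P) :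
    ∫ ω, (w ω • (f ω - b ω) + b ω) ∂P = ∫ ω, f ω ∂P := by
  have hwfb : Integrable (fun ω => w ω • f ω - w ω • b ω) P := hwf.sub hwb
  simp only [smul_sub]
  rw [integral_add hwfb hb, integral_sub hwf hwb, hwf_eq, hwb_eq, sub_add_cancel]

variable [IsFiniteMeasure P]

theorem integral_smul_eq_integral_of_setIntegral_eq {E : Type*} [NormedAddCommGroup E]
    [NormedSpace ℝ E] [CompleteSpace E] (hm : m ≤ mΩ) {w : Ω → ℝ} (hw : Integrable w P)
    (hset : ∀ s, MeasurableSet[m] s → ∫ ω in s, w ω ∂P = P.real s)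
    {f : Ω → E} (hf : StronglyMeasurable[m] f) (hwf : Integrable (w • f) P) :
    ∫ ω, w ω • f ω ∂P = ∫ ω, f ω ∂P := by
  have hw_one : P[w | m] =ᵐ[P] fun _ => 1 := by
    refine (ae_eq_condExp_of_forall_setIntegral_eq hm hw (fun _ _ _ => integrableOn_const)
      (fun s hs _ => ?_) aestronglyMeasurable_const).symm
    simp only [setIntegral_const, smul_eq_mul, mul_one, hset s hs]
  calc ∫ ω, w ω • f ω ∂P = ∫ ω, (P[w • f | m]) ω ∂P := (integral_condExp hm).symm
    _ = ∫ ω, f ω ∂P := by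
      refine integral_congr_ae ?_
      filter_upwards [condExp_smul_of_aestronglyMeasurable_right hw hwf hf.aestronglyMeasurable,
        hw_one] with ω hpull hone
      simp [hpull, hone]

theorem condExp_indicator_mul_of_measurableSet (hm : m ≤ mΩ) {s : Set Ω}
    (hs : MeasurableSet[m] s) {a : Ω → ℝ} (ha : Integrable a P) :
    P[s.indicator (fun _ => 1) * a | m] =ᵐ[P] P[s.indicator (fun _ => 1) | m] * P[a | m] := by
  have hs_ind : StronglyMeasurable[m] (s.indicator fun _ => (1 : ℝ)) :=
    stronglyMeasurable_const.indicator hs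
  rw [condExp_of_stronglyMeasurable hm hs_ind ((integrable_const 1).indicator (hm s hs))]
  exact condExp_mul_of_stronglyMeasurable_left hs_ind
    (ha.bdd_mul (c := 1) (hs_ind.mono hm).aestronglyMeasurable
      (Eventually.of_forall fun ω => by by_cases h : ω ∈ s <;> simp [h])) ha

theorem setIntegral_div_eq_measureReal (hm : m ≤ mΩ) {a g : Ω → ℝ} (ha : Integrable a P)
    (hg : StronglyMeasurable[m] g) (hga : g =ᵐ[P] P[a | m]) {ε : ℝ} (hε : 0 < ε)
    (hgε : ∀ᵐ ω ∂P, ε ≤ g ω) {s : Set Ω} (hs : MeasurableSet s)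
    (hsa : P[s.indicator (fun _ => 1) * a | m] =ᵐ[P] P[s.indicator (fun _ => 1) | m] * P[a | m]) :
    ∫ ω in s, a ω / g ω ∂P = P.real s := by
  have hsa_int : Integrable (s.indicator (fun _ => 1) * a) P :=
    ha.bdd_mul (c := 1) ((stronglyMeasurable_const.indicator hs).aestronglyMeasurable)
      (Eventually.of_forall fun ω => by by_cases h : ω ∈ s <;> simp [h])
  have hg_inv : StronglyMeasurable[m] fun ω => (g ω)⁻¹ := hg.measurable.inv.stronglyMeasurable
  calc ∫ ω in s, a ω / g ω ∂P
      = ∫ ω, (s.indicator (fun _ => 1) * a * fun ω => (g ω)⁻¹ : Ω → ℝ) ω ∂P := by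
        rw [← integral_indicator hs]
        congr 1 with ω
        by_cases h : ω ∈ s <;> simp [h, div_eq_mul_inv]
    _ = ∫ ω, (P[s.indicator (fun _ => 1) * a * fun ω => (g ω)⁻¹ | m]) ω ∂P :=
      (integral_condExp hm).symm
    _ = ∫ ω, (P[s.indicator (fun _ => 1) | m]) ω ∂P := by
      refine integral_congr_ae ?_
      filter_upwards [condExp_mul_of_aestronglyMeasurable_right hg_inv.aestronglyMeasurable
        (integrable_mul_inv_of_le hsa_int (hg.mono hm).measurable.aemeasurable hε hgε) hsa_int,
        hsa, hga, hgε] with ω hpull hindep hga hgε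
      rw [hpull, Pi.mul_apply, hindep, Pi.mul_apply, ← hga,
        mul_inv_cancel_right₀ (hε.trans_le hgε).ne']
    _ = P.real s := by
      rw [integral_condExp hm]
      exact integral_indicator_one hs

theorem integral_div_smul_eq_integral {E : Type*} [NormedAddCommGroup E] [NormedSpace ℝ E]
    [CompleteSpace E] {m' : MeasurableSpace Ω} (hm : m ≤ mΩ) (hm' : m' ≤ mΩ) {a g : Ω → ℝ}
    (ha : Integrable a P) (hg : StronglyMeasurable[m] g) (hga : g =ᵐ[P] P[a | m]) {ε : ℝ}
    (hε : 0 < ε) (hgε : ∀ᵐ ω ∂P, ε ≤ g ω)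
    (hindep : ∀ s, MeasurableSet[m'] s →
      P[s.indicator (fun _ => 1) * a | m] =ᵐ[P] P[s.indicator (fun _ => 1) | m] * P[a | m])
    {f : Ω → E} (hf : StronglyMeasurable[m'] f)
    (hwf : Integrable (fun ω => (a ω / g ω) • f ω) P) :
    ∫ ω, (a ω / g ω) • f ω ∂P = ∫ ω, f ω ∂P := by
  have hw : Integrable (fun ω => a ω / g ω) P := by
    simpa only [div_eq_mul_inv] using
      integrable_mul_inv_of_le ha (hg.mono hm).measurable.aemeasurable hε hgε
  exact integral_smul_eq_integral_of_setIntegral_eq hm' hw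
    (fun s hs => setIntegral_div_eq_measureReal hm ha hg hga hε hgε (hm' s hs) (hindep s hs))
    hf hwf

end

theorem dr_mean_embedding_identification_general
    {Ω : Type*} [MeasurableSpace Ω] (P : Measure Ω) [IsProbabilityMeasure P]
    {𝒳 : Type*} [MeasurableSpace 𝒳]
    {d : ℕ}
    {H : Type*} [NormedAddCommGroup H] [InnerProductSpace ℝ H] [CompleteSpace H]
    -- random elements
    (X : Ω → 𝒳) (A : Ω → ℝ) (Y0 Y1 Y : Ω → (Fin d → ℝ))
    (hX : Measurable X) (hA : Measurable A) (hY0 : Measurable Y0) (hY1 : Measurable Y1)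
    (hA01 : ∀ ω, A ω = 0 ∨ A ω = 1)
    -- Condition A1: the observed outcome
    (hA1 : ∀ ω, Y ω = A ω • Y1 ω + (1 - A ω) • Y0 ω)
    -- Condition A2: σ(Y⁰,Y¹) ⟂ σ(A) conditionally on σ(X)
    (hA2 : ∀ s t : Set Ω,
      MeasurableSet[MeasurableSpace.comap (fun ω => (Y0 ω, Y1 ω)) inferInstance] s →
      MeasurableSet[MeasurableSpace.comap A inferInstance] t →
      (P[(s ∩ t).indicator (fun _ => (1 : ℝ)) | MeasurableSpace.comap X inferInstance])
        =ᵐ[P] fun ω =>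
          ((P[s.indicator (fun _ => (1 : ℝ)) | MeasurableSpace.comap X inferInstance]) ω) *
          ((P[t.indicator (fun _ => (1 : ℝ)) | MeasurableSpace.comap X inferInstance]) ω))
    -- the propensity score π(X) := E[A | X]
    (π : 𝒳 → ℝ) (hπmeas : Measurable π)
    (hπ : (fun ω => π (X ω)) =ᵐ[P] P[A | MeasurableSpace.comap X inferInstance])
    -- Condition A3: ε < π(X) < 1 − ε almost surely
    (ε : ℝ) (hε : 0 < ε)
    (hA3 : ∀ᵐ ω ∂P, ε < π (X ω) ∧ π (X ω) < 1 - ε)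
    -- Bochner-measurable feature map with E‖ξ(Y¹)‖ < ∞
    (ξ : (Fin d → ℝ) → H) (hξ : StronglyMeasurable ξ)
    (hξint : Integrable (fun ω => ξ (Y1 ω)) P)
    -- σ(X)-measurable, Bochner-integrable β with π(X)·β(X) = E[A·ξ(Y) | X] a.s.
    (β : 𝒳 → H) (hβmeas : StronglyMeasurable β)
    (hβint : Integrable (fun ω => β (X ω)) P) :
    ∫ ω, ξ (Y1 ω) ∂P
      = ∫ ω, ((A ω / π (X ω)) • (ξ (Y ω) - β (X ω)) + β (X ω)) ∂P := by
  have hm : MeasurableSpace.comap X inferInstance ≤ _ := hX.comap_le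
  have hm' : MeasurableSpace.comap (fun ω => (Y0 ω, Y1 ω)) inferInstance ≤ _ :=
    (hY0.prodMk hY1).comap_le
  have hA_inter : ∀ s,
      (s ∩ A ⁻¹' {1}).indicator (fun _ => (1 : ℝ)) = s.indicator (fun _ => 1) * A :=
    fun s => funext fun ω => by by_cases hs : ω ∈ s <;> rcases hA01 ω with h | h <;> simp [hs, h]
  have hA_ind : (A ⁻¹' {1}).indicator (fun _ => (1 : ℝ)) = A :=
    funext fun ω => by rcases hA01 ω with h | h <;> simp [h]
  have hA_bdd : ∀ ω, ‖A ω‖ ≤ 1 := fun ω => by rcases hA01 ω with h | h <;> simp [h]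
  have hA_int : Integrable A P :=
    (integrable_const (1 : ℝ)).mono' hA.aestronglyMeasurable (Eventually.of_forall hA_bdd)
  have hπX : StronglyMeasurable[MeasurableSpace.comap X inferInstance] fun ω => π (X ω) :=
    (hπmeas.comp (comap_measurable X)).stronglyMeasurable
  have hπε : ∀ᵐ ω ∂P, ε ≤ π (X ω) := hA3.mono fun ω h => h.1.le
  have hw_int : ∀ f : Ω → H, Integrable f P →
      Integrable (fun ω => (A ω / π (X ω)) • f ω) P := fun f hf =>
    integrable_div_smul_of_le hf hA.aemeasurable hA_bdd (hπmeas.comp hX).aemeasurable hε hπε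
  have hY_eq : ∀ ω, (A ω / π (X ω)) • (ξ (Y ω) - β (X ω))
      = (A ω / π (X ω)) • (ξ (Y1 ω) - β (X ω)) := fun ω => by
    rcases hA01 ω with h | h <;> simp [hA1 ω, h]
  have hipw_Y1 : ∫ ω, (A ω / π (X ω)) • ξ (Y1 ω) ∂P = ∫ ω, ξ (Y1 ω) ∂P := by
    refine integral_div_smul_eq_integral hm hm' hA_int hπX hπ hε hπε (fun s hs => ?_)
      (hξ.comp_measurable (measurable_snd.comp (comap_measurable _))) (hw_int _ hξint)
    have h := hA2 s (A ⁻¹' {1}) hs ⟨{1}, measurableSet_singleton 1, rfl⟩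
    rwa [hA_inter, hA_ind] at h
  have hipw_β : ∫ ω, (A ω / π (X ω)) • β (X ω) ∂P = ∫ ω, β (X ω) ∂P :=
    integral_div_smul_eq_integral hm hm hA_int hπX hπ hε hπε
      (fun _ hs => condExp_indicator_mul_of_measurableSet hm hs hA_int)
      (hβmeas.comp_measurable (comap_measurable X)) (hw_int _ hβint)
  simp_rw [hY_eq]
  exact (integral_smul_sub_add_eq_of_integral_smul_eq (hw_int _ hξint) (hw_int _ hβint) hβint
    hipw_Y1 hipw_β).symm

/-- Under Conditions A1–A3, the mean embedding of the counterfactual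
outcome `Y¹` admits the doubly robust representation
`E[ξ(Y¹)] = E[(A/π(X))·(ξ(Y) − β(X)) + β(X)]`, both sides being Bochner integrals. -/
theorem dr_mean_embedding_identification
    {Ω : Type*} [MeasurableSpace Ω] (P : Measure Ω) [IsProbabilityMeasure P]
    {𝒳 : Type*} [MeasurableSpace 𝒳]
    {d : ℕ}
    {H : Type*} [NormedAddCommGroup H] [InnerProductSpace ℝ H] [CompleteSpace H]
    [TopologicalSpace.SeparableSpace H]
    -- random elements
    (X : Ω → 𝒳) (A : Ω → ℝ) (Y0 Y1 Y : Ω → (Fin d → ℝ))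
    (hX : Measurable X) (hA : Measurable A) (hY0 : Measurable Y0) (hY1 : Measurable Y1)
    (hA01 : ∀ ω, A ω = 0 ∨ A ω = 1)
    -- Condition A1: the observed outcome
    (hA1 : ∀ ω, Y ω = A ω • Y1 ω + (1 - A ω) • Y0 ω)
    -- Condition A2: σ(Y⁰,Y¹) ⟂ σ(A) conditionally on σ(X)
    (hA2 : ∀ s t : Set Ω,
      MeasurableSet[MeasurableSpace.comap (fun ω => (Y0 ω, Y1 ω)) inferInstance] s →
      MeasurableSet[MeasurableSpace.comap A inferInstance] t →
      (P[(s ∩ t).indicator (fun _ => (1 : ℝ)) | MeasurableSpace.comap X inferInstance])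
        =ᵐ[P] fun ω =>
          ((P[s.indicator (fun _ => (1 : ℝ)) | MeasurableSpace.comap X inferInstance]) ω) *
          ((P[t.indicator (fun _ => (1 : ℝ)) | MeasurableSpace.comap X inferInstance]) ω))
    -- the propensity score π(X) := E[A | X]
    (π : 𝒳 → ℝ) (hπmeas : Measurable π)
    (hπ : (fun ω => π (X ω)) =ᵐ[P] P[A | MeasurableSpace.comap X inferInstance])
    -- Condition A3: ε < π(X) < 1 − ε almost surely
    (ε : ℝ) (hε : 0 < ε)
    (hA3 : ∀ᵐ ω ∂P, ε < π (X ω) ∧ π (X ω) < 1 - ε)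
    -- Bochner-measurable feature map with E‖ξ(Y¹)‖ < ∞
    (ξ : (Fin d → ℝ) → H) (hξ : StronglyMeasurable ξ)
    (hξint : Integrable (fun ω => ξ (Y1 ω)) P)
    -- σ(X)-measurable, Bochner-integrable β with π(X)·β(X) = E[A·ξ(Y) | X] a.s.
    (β : 𝒳 → H) (hβmeas : StronglyMeasurable β)
    (hβint : Integrable (fun ω => β (X ω)) P)
    (hβ : (fun ω => π (X ω) • β (X ω))
        =ᵐ[P] P[fun ω => A ω • ξ (Y ω) | MeasurableSpace.comap X inferInstance]) :
    ∫ ω, ξ (Y1 ω) ∂P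
      = ∫ ω, ((A ω / π (X ω)) • (ξ (Y ω) - β (X ω)) + β (X ω)) ∂P :=
  dr_mean_embedding_identification_general P X A Y0 Y1 Y hX hA hY0 hY1 hA01 hA1 hA2 π hπmeas hπ ε hε
    hA3 ξ hξ hξint β hβmeas hβint
end

section
/- Let φ(Z) := (A/π(X))·(ξ(Y) − β(X)) + β(X) be the doubly robust embedding with the true nuisances, and let φ̂(Z) := (A/π̂(X))·(ξ(Y) − β̂(X)) + β̂(X) be its analogue with fixed measurable nuisance estimates π̂: 𝒳 → [ε, 1−ε] and Bochner-integrable β̂: 𝒳 → H. Then almost surely E[φ̂(Z) − φ(Z) | X] = ((π(X) − π̂(X))/π̂(X)) · (β(X) − β̂(X)). -/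
/-!
Write `φ_{q,b} = (A/q)•(ξ(Y) − b) + b` for a σ(X)-measurable nuisance pair `(q, b)`. Pulling the
σ(X)-measurable factors out of the conditional expectation gives
`E[φ_{q,b} | X] = q⁻¹ • (E[A ξ(Y) | X] − E[A | X] • b) + b = (π/q) • (β − b) + b`,
using `E[A | X] = π` and `E[A ξ(Y) | X] = π • β`. For `(q, b) = (π, β)` this is `β`; for
`(q, b) = (π̂, β̂)` it is `(π/π̂) • (β − β̂) + β̂`, and the difference is the claimed bias.
-/

open MeasureTheory Filter Set

section InverseWeighting

variable {Ω H : Type*} {m m0 : MeasurableSpace Ω} {μ : Measure Ω}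
  [NormedAddCommGroup H] [NormedSpace ℝ H]
  {A q : Ω → ℝ} {F b : Ω → H} {C c : ℝ}

theorem integrable_div_smul_sub_add (hA : AEStronglyMeasurable A μ) (hAC : ∀ᵐ ω ∂μ, ‖A ω‖ ≤ C)
    (hq : AEStronglyMeasurable q μ) (hqc : ∀ᵐ ω ∂μ, ‖(q ω)⁻¹‖ ≤ c)
    (hF : Integrable F μ) (hb : Integrable b μ) :
    Integrable (fun ω => (A ω / q ω) • (F ω - b ω) + b ω) μ := by
  have hAq : ∀ᵐ ω ∂μ, ‖A ω / q ω‖ ≤ C * c := by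
    filter_upwards [hAC, hqc] with ω hA hq
    rw [div_eq_mul_inv, norm_mul]
    exact mul_le_mul hA hq (norm_nonneg _) ((norm_nonneg _).trans hA)
  exact ((hF.sub hb).bdd_smul (C * c) (hA.div₀ hq) hAq).add hb

theorem condExp_div_smul_sub_add [IsFiniteMeasure μ] [CompleteSpace H] (hm : m ≤ m0)
    (hA : AEStronglyMeasurable A μ) (hAC : ∀ᵐ ω ∂μ, ‖A ω‖ ≤ C)
    (hq : StronglyMeasurable[m] q) (hqc : ∀ᵐ ω ∂μ, ‖(q ω)⁻¹‖ ≤ c)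
    (hF : Integrable F μ) (hb : StronglyMeasurable[m] b) (hbi : Integrable b μ) :
    μ[fun ω => (A ω / q ω) • (F ω - b ω) + b ω | m] =ᵐ[μ]
      fun ω => (q ω)⁻¹ • (μ[fun ω => A ω • F ω | m] ω - μ[A | m] ω • b ω) + b ω := by
  set qi : Ω → ℝ := fun ω => (q ω)⁻¹
  have hqi : StronglyMeasurable[m] qi := hq.inv₀
  have hqib : StronglyMeasurable[m] (qi • b) := hqi.smul hb
  have hAi : Integrable A μ := (integrable_const C).mono' hA hAC
  have hAF : Integrable (A • F) μ := hF.bdd_smul C hA hAC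
  have hqAF : Integrable (qi • (A • F)) μ :=
    hAF.bdd_smul c (hqi.mono hm).aestronglyMeasurable hqc
  have hAqb : Integrable (A • (qi • b)) μ :=
    (hbi.bdd_smul c (hqi.mono hm).aestronglyMeasurable hqc).bdd_smul C hA hAC
  have hexpand : (fun ω => (A ω / q ω) • (F ω - b ω) + b ω) = qi • (A • F) - A • (qi • b) + b := by
    ext ω
    simp only [qi, Pi.add_apply, Pi.sub_apply, Pi.smul_apply', smul_sub, smul_smul, Pi.mul_apply,
      div_eq_mul_inv, mul_comm (q ω)⁻¹]
  calc μ[fun ω => (A ω / q ω) • (F ω - b ω) + b ω | m]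
      =ᵐ[μ] μ[qi • (A • F) | m] - μ[A • (qi • b) | m] + μ[b | m] := by
        rw [hexpand]
        exact (condExp_add (hqAF.sub hAqb) hbi m).trans
          ((condExp_sub hqAF hAqb m).add EventuallyEq.rfl)
    _ =ᵐ[μ] qi • μ[A • F | m] - μ[A | m] • (qi • b) + b := by
        rw [condExp_of_stronglyMeasurable hm hb hbi]
        exact ((condExp_smul_of_aestronglyMeasurable_left hqi.aestronglyMeasurable hqAF hAF).sub
          (condExp_smul_of_aestronglyMeasurable_right hAi hAqb hqib.aestronglyMeasurable)).add
          EventuallyEq.rfl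
    _ = fun ω => (q ω)⁻¹ • (μ[fun ω => A ω • F ω | m] ω - μ[A | m] ω • b ω) + b ω := by
        ext ω
        simp only [qi, Pi.add_apply, Pi.sub_apply, Pi.smul_apply', smul_sub, smul_comm (μ[A | m] ω)]
        rfl

end InverseWeighting

theorem norm_inv_le_inv_of_le {ε x : ℝ} (hε : 0 < ε) (h : ε ≤ x) : ‖x⁻¹‖ ≤ ε⁻¹ := by
  rw [norm_inv, Real.norm_of_nonneg (hε.le.trans h)]
  exact inv_anti₀ hε h

theorem dr_embedding_conditional_bias_general
    {Ω : Type*} [MeasurableSpace Ω] (P : Measure Ω) [IsProbabilityMeasure P]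
    {𝒳 : Type*} [MeasurableSpace 𝒳]
    {d : ℕ}
    {H : Type*} [NormedAddCommGroup H] [InnerProductSpace ℝ H] [CompleteSpace H]
    -- random elements
    (X : Ω → 𝒳) (A : Ω → ℝ) (Y : Ω → (Fin d → ℝ))
    (hX : Measurable X) (hA : Measurable A)
    (hA01 : ∀ ω, A ω = 0 ∨ A ω = 1)
    -- the propensity score π(X) := E[A | X]
    (π : 𝒳 → ℝ) (hπmeas : Measurable π)
    (hπ : (fun ω => π (X ω)) =ᵐ[P] P[A | MeasurableSpace.comap X inferInstance])
    -- Condition A3: ε < π(X) < 1 − ε almost surely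
    (ε : ℝ) (hε : 0 < ε)
    (hA3 : ∀ᵐ ω ∂P, ε < π (X ω) ∧ π (X ω) < 1 - ε)
    -- Bochner-measurable feature map with E‖ξ(Y)‖ < ∞
    (ξ : (Fin d → ℝ) → H)
    (hξint : Integrable (fun ω => ξ (Y ω)) P)
    -- σ(X)-measurable, Bochner-integrable β with π(X)·β(X) = E[A·ξ(Y) | X] a.s.
    (β : 𝒳 → H) (hβmeas : StronglyMeasurable β)
    (hβint : Integrable (fun ω => β (X ω)) P)
    (hβ : (fun ω => π (X ω) • β (X ω))
        =ᵐ[P] P[fun ω => A ω • ξ (Y ω) | MeasurableSpace.comap X inferInstance])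
    -- fixed measurable nuisance estimates π̂ : 𝒳 → [ε, 1−ε] and Bochner-integrable β̂
    (πhat : 𝒳 → ℝ) (hπhatmeas : Measurable πhat)
    (hπhatrange : ∀ x, πhat x ∈ Set.Icc ε (1 - ε))
    (βhat : 𝒳 → H) (hβhatmeas : StronglyMeasurable βhat)
    (hβhatint : Integrable (fun ω => βhat (X ω)) P) :
    (P[fun ω =>
        ((A ω / πhat (X ω)) • (ξ (Y ω) - βhat (X ω)) + βhat (X ω))
        - ((A ω / π (X ω)) • (ξ (Y ω) - β (X ω)) + β (X ω))
      | MeasurableSpace.comap X inferInstance])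
      =ᵐ[P] fun ω =>
        ((π (X ω) - πhat (X ω)) / πhat (X ω)) • (β (X ω) - βhat (X ω)) := by
  have hAm : AEStronglyMeasurable A P := hA.aestronglyMeasurable
  set m := MeasurableSpace.comap X inferInstance
  have hm : m ≤ _ := hX.comap_le
  have hXm : Measurable[m] X := comap_measurable X
  have hAbdd : ∀ᵐ ω ∂P, ‖A ω‖ ≤ 1 :=
    ae_of_all _ fun ω => by rcases hA01 ω with h | h <;> simp [h]
  have hπhatpos : ∀ x, 0 < πhat x := fun x => hε.trans_le (hπhatrange x).1
  have hπhatinv : ∀ᵐ ω ∂P, ‖(πhat (X ω))⁻¹‖ ≤ ε⁻¹ :=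
    ae_of_all _ fun ω => norm_inv_le_inv_of_le hε (hπhatrange _).1
  have hπinv : ∀ᵐ ω ∂P, ‖(π (X ω))⁻¹‖ ≤ ε⁻¹ := by
    filter_upwards [hA3] with ω hω using norm_inv_le_inv_of_le hε hω.1.le
  have hπhatX : StronglyMeasurable[m] fun ω => πhat (X ω) :=
    (hπhatmeas.comp hXm).stronglyMeasurable
  have hπX : StronglyMeasurable[m] fun ω => π (X ω) := (hπmeas.comp hXm).stronglyMeasurable
  have hβhatX : StronglyMeasurable[m] fun ω => βhat (X ω) := hβhatmeas.comp_measurable hXm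
  have hβX : StronglyMeasurable[m] fun ω => β (X ω) := hβmeas.comp_measurable hXm
  have hest := condExp_div_smul_sub_add hm hAm hAbdd hπhatX hπhatinv hξint hβhatX hβhatint
  have htrue := condExp_div_smul_sub_add hm hAm hAbdd hπX hπinv hξint hβX hβint
  refine (condExp_sub
    (integrable_div_smul_sub_add hAm hAbdd (hπhatX.mono hm).aestronglyMeasurable hπhatinv hξint
      hβhatint)
    (integrable_div_smul_sub_add hAm hAbdd (hπX.mono hm).aestronglyMeasurable hπinv hξint
      hβint) _).trans ?_
  filter_upwards [hest, htrue, hπ, hβ] with ω hestω htrueω hπω hβω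
  rw [Pi.sub_apply, hestω, htrueω, ← hπω, ← hβω, sub_self, smul_zero, zero_add, ← smul_sub,
    smul_smul, sub_div, div_self (hπhatpos _).ne', sub_smul, one_smul, inv_mul_eq_div]
  abel

/-- Conditional bias of the doubly robust embedding: with true nuisances
`φ(Z) = (A/π(X))·(ξ(Y) − β(X)) + β(X)` and estimated nuisances
`φ̂(Z) = (A/π̂(X))·(ξ(Y) − β̂(X)) + β̂(X)`, one has almost surely
`E[φ̂(Z) − φ(Z) | X] = ((π(X) − π̂(X))/π̂(X)) • (β(X) − β̂(X))`. -/
theorem dr_embedding_conditional_bias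
    {Ω : Type*} [MeasurableSpace Ω] (P : Measure Ω) [IsProbabilityMeasure P]
    {𝒳 : Type*} [MeasurableSpace 𝒳]
    {d : ℕ}
    {H : Type*} [NormedAddCommGroup H] [InnerProductSpace ℝ H] [CompleteSpace H]
    [TopologicalSpace.SeparableSpace H]
    -- random elements
    (X : Ω → 𝒳) (A : Ω → ℝ) (Y0 Y1 Y : Ω → (Fin d → ℝ))
    (hX : Measurable X) (hA : Measurable A) (hY0 : Measurable Y0) (hY1 : Measurable Y1)
    (hA01 : ∀ ω, A ω = 0 ∨ A ω = 1)
    -- Condition A1: the observed outcome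
    (hA1 : ∀ ω, Y ω = A ω • Y1 ω + (1 - A ω) • Y0 ω)
    -- Condition A2: σ(Y⁰,Y¹) ⟂ σ(A) conditionally on σ(X)
    (hA2 : ∀ s t : Set Ω,
      MeasurableSet[MeasurableSpace.comap (fun ω => (Y0 ω, Y1 ω)) inferInstance] s →
      MeasurableSet[MeasurableSpace.comap A inferInstance] t →
      (P[(s ∩ t).indicator (fun _ => (1 : ℝ)) | MeasurableSpace.comap X inferInstance])
        =ᵐ[P] fun ω =>
          ((P[s.indicator (fun _ => (1 : ℝ)) | MeasurableSpace.comap X inferInstance]) ω) *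
          ((P[t.indicator (fun _ => (1 : ℝ)) | MeasurableSpace.comap X inferInstance]) ω))
    -- the propensity score π(X) := E[A | X]
    (π : 𝒳 → ℝ) (hπmeas : Measurable π)
    (hπ : (fun ω => π (X ω)) =ᵐ[P] P[A | MeasurableSpace.comap X inferInstance])
    -- Condition A3: ε < π(X) < 1 − ε almost surely
    (ε : ℝ) (hε : 0 < ε)
    (hA3 : ∀ᵐ ω ∂P, ε < π (X ω) ∧ π (X ω) < 1 - ε)
    -- Bochner-measurable feature map with E‖ξ(Y)‖ < ∞
    (ξ : (Fin d → ℝ) → H) (hξ : StronglyMeasurable ξ)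
    (hξint : Integrable (fun ω => ξ (Y ω)) P)
    -- σ(X)-measurable, Bochner-integrable β with π(X)·β(X) = E[A·ξ(Y) | X] a.s.
    (β : 𝒳 → H) (hβmeas : StronglyMeasurable β)
    (hβint : Integrable (fun ω => β (X ω)) P)
    (hβ : (fun ω => π (X ω) • β (X ω))
        =ᵐ[P] P[fun ω => A ω • ξ (Y ω) | MeasurableSpace.comap X inferInstance])
    -- fixed measurable nuisance estimates π̂ : 𝒳 → [ε, 1−ε] and Bochner-integrable β̂
    (πhat : 𝒳 → ℝ) (hπhatmeas : Measurable πhat)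
    (hπhatrange : ∀ x, πhat x ∈ Set.Icc ε (1 - ε))
    (βhat : 𝒳 → H) (hβhatmeas : StronglyMeasurable βhat)
    (hβhatint : Integrable (fun ω => βhat (X ω)) P) :
    (P[fun ω =>
        ((A ω / πhat (X ω)) • (ξ (Y ω) - βhat (X ω)) + βhat (X ω))
        - ((A ω / π (X ω)) • (ξ (Y ω) - β (X ω)) + β (X ω))
      | MeasurableSpace.comap X inferInstance])
      =ᵐ[P] fun ω =>
        ((π (X ω) - πhat (X ω)) / πhat (X ω)) • (β (X ω) - βhat (X ω)) :=
  dr_embedding_conditional_bias_general P X A Y hX hA hA01 π hπmeas hπ ε hε hA3 ξ hξint β hβmeas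
    hβint hβ πhat hπhatmeas hπhatrange βhat hβhatmeas hβhatint
end

section
/- Let φ(Z) := (A/π(X))·(ξ(Y) − β(X)) + β(X) and φ̂(Z) := (A/π̂(X))·(ξ(Y) − β̂(X)) + β̂(X), where π̂: 𝒳 → [ε, 1−ε] is measurable and β̂: 𝒳 → H is Bochner measurable with E‖β̂(X)‖_H² < ∞ and E‖β(X)‖_H² < ∞. Then the bias of the doubly robust embedding obeys the product bound ‖E[φ̂(Z)] − E[φ(Z)]‖_H ≤ (1/ε) · (E[(π(X) − π̂(X))²])^{1/2} · (E[‖β(X) − β̂(X)‖_H²])^{1/2}. -/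
/-!
Conditioning on `X` and pulling out the `σ(X)`-measurable weights, `E[φ̂] = E[β̂ + (π/π̂)(β − β̂)]`,
while `E[φ] = E[β]`. The bias is therefore `E[((π − π̂)/π̂)(β − β̂)]`, a product of the two
nuisance errors, and Cauchy–Schwarz together with `π̂ ≥ ε` bounds it.
-/

open MeasureTheory

section CauchySchwarz

variable {Ω E F : Type*} {m0 : MeasurableSpace Ω} {μ : Measure Ω}
  [NormedAddCommGroup E] [NormedAddCommGroup F]

theorem integral_norm_mul_norm_le_sqrt_mul_sqrt {f : Ω → E} {g : Ω → F}
    (hf : MemLp f 2 μ) (hg : MemLp g 2 μ) :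
    ∫ ω, ‖f ω‖ * ‖g ω‖ ∂μ ≤ √(∫ ω, ‖f ω‖ ^ 2 ∂μ) * √(∫ ω, ‖g ω‖ ^ 2 ∂μ) := by
  have h := integral_mul_norm_le_Lp_mul_Lq (f := fun ω => ‖f ω‖) (g := fun ω => ‖g ω‖)
    Real.HolderConjugate.two_two (by simpa using hf.norm) (by simpa using hg.norm)
  simpa only [norm_norm, Real.rpow_two, Real.sqrt_eq_rpow] using h

theorem norm_integral_smul_le_mul_sqrt_mul_sqrt [NormedSpace ℝ E] {r s : Ω → ℝ} {w : Ω → E}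
    {C : ℝ} (hC : 0 ≤ C) (hs : MemLp s 2 μ) (hw : MemLp w 2 μ)
    (hrs : ∀ᵐ ω ∂μ, |r ω| ≤ C * |s ω|) :
    ‖∫ ω, r ω • w ω ∂μ‖ ≤ C * √(∫ ω, s ω ^ 2 ∂μ) * √(∫ ω, ‖w ω‖ ^ 2 ∂μ) := by
  have hsw : Integrable (fun ω => ‖s ω‖ * ‖w ω‖) μ := hs.norm.integrable_mul hw.norm
  calc ‖∫ ω, r ω • w ω ∂μ‖ ≤ ∫ ω, ‖r ω • w ω‖ ∂μ := norm_integral_le_integral_norm _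
    _ ≤ ∫ ω, C * (‖s ω‖ * ‖w ω‖) ∂μ := by
        refine integral_mono_of_nonneg (ae_of_all _ fun _ => norm_nonneg _) (hsw.const_mul C) ?_
        filter_upwards [hrs] with ω h
        rw [norm_smul, Real.norm_eq_abs, Real.norm_eq_abs, ← mul_assoc]
        gcongr
    _ = C * ∫ ω, ‖s ω‖ * ‖w ω‖ ∂μ := integral_const_mul C _
    _ ≤ C * (√(∫ ω, ‖s ω‖ ^ 2 ∂μ) * √(∫ ω, ‖w ω‖ ^ 2 ∂μ)) := by
        gcongr
        exact integral_norm_mul_norm_le_sqrt_mul_sqrt hs hw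
    _ = C * √(∫ ω, s ω ^ 2 ∂μ) * √(∫ ω, ‖w ω‖ ^ 2 ∂μ) := by
        simp only [Real.norm_eq_abs, sq_abs, mul_assoc]

end CauchySchwarz

section ConditionalExpectation

variable {Ω E : Type*} {m m0 : MeasurableSpace Ω} {μ : Measure Ω} [IsFiniteMeasure μ]
  [NormedAddCommGroup E] [NormedSpace ℝ E] [CompleteSpace E]
  {A g p : Ω → ℝ} {f b c : Ω → E}

theorem integral_mul_smul_sub_eq_of_condExp (hm : m ≤ m0) (hA : MemLp A ⊤ μ)
    (hg_meas : StronglyMeasurable[m] g) (hg : MemLp g ⊤ μ) (hf : Integrable f μ)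
    (hc_meas : StronglyMeasurable[m] c) (hc : Integrable c μ)
    (hpA : p =ᵐ[μ] μ[A|m]) (hpb : (fun ω => p ω • b ω) =ᵐ[μ] μ[fun ω => A ω • f ω|m]) :
    ∫ ω, (g ω * A ω) • (f ω - c ω) ∂μ = ∫ ω, (g ω * p ω) • (b ω - c ω) ∂μ := by
  have hAf : Integrable (fun ω => A ω • f ω) μ := hf.smul_of_top_right hA
  have hgAf : Integrable (fun ω => g ω • A ω • f ω) μ := hAf.smul_of_top_right hg
  have hAgc : Integrable (fun ω => A ω • g ω • c ω) μ :=
    (hc.smul_of_top_right hg).smul_of_top_right hA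
  have hgAf_condExp : μ[fun ω => g ω • A ω • f ω|m] =ᵐ[μ] fun ω => g ω • p ω • b ω := by
    filter_upwards [condExp_smul_of_aestronglyMeasurable_left hg_meas.aestronglyMeasurable hgAf
      hAf, hpb] with ω h hω
    rw [hω]
    exact h
  have hAgc_condExp : μ[fun ω => A ω • g ω • c ω|m] =ᵐ[μ] fun ω => p ω • g ω • c ω := by
    filter_upwards [condExp_smul_of_aestronglyMeasurable_right (hA.integrable le_top) hAgc
      (hg_meas.smul hc_meas).aestronglyMeasurable, hpA] with ω h hω
    rw [hω]
    exact h
  calc ∫ ω, (g ω * A ω) • (f ω - c ω) ∂μ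
      = ∫ ω, (g ω • A ω • f ω - A ω • g ω • c ω) ∂μ :=
        integral_congr_ae (ae_of_all _ fun ω => by module)
    _ = ∫ ω, g ω • p ω • b ω ∂μ - ∫ ω, p ω • g ω • c ω ∂μ := by
        rw [integral_sub hgAf hAgc, ← integral_condExp hm, integral_congr_ae hgAf_condExp,
          ← integral_condExp (f := fun ω => A ω • g ω • c ω) hm, integral_congr_ae hAgc_condExp]
    _ = ∫ ω, (g ω * p ω) • (b ω - c ω) ∂μ := by
        rw [← integral_sub (integrable_condExp.congr hgAf_condExp)
          (integrable_condExp.congr hAgc_condExp)]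
        exact integral_congr_ae (ae_of_all _ fun ω => by module)

/-- With `g = 1/π̂`, `c = β̂`, `p = π`, `b = β` and `f = ξ(Y)`, the integrand on the left is the
doubly robust score `φ̂`. -/
theorem integral_aipw_sub_integral_eq (hm : m ≤ m0) (hA : MemLp A ⊤ μ)
    (hg_meas : StronglyMeasurable[m] g) (hg : MemLp g ⊤ μ) (hp : MemLp p ⊤ μ)
    (hf : Integrable f μ) (hb : Integrable b μ) (hc_meas : StronglyMeasurable[m] c)
    (hc : Integrable c μ) (hpA : p =ᵐ[μ] μ[A|m])
    (hpb : (fun ω => p ω • b ω) =ᵐ[μ] μ[fun ω => A ω • f ω|m]) :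
    ∫ ω, ((g ω * A ω) • (f ω - c ω) + c ω) ∂μ - ∫ ω, b ω ∂μ
      = ∫ ω, (g ω * p ω - 1) • (b ω - c ω) ∂μ := by
  have hgAfc : Integrable (fun ω => (g ω * A ω) • (f ω - c ω)) μ :=
    (hf.sub hc).smul_of_top_right (hA.mul hg)
  have hgpbc : Integrable (fun ω => (g ω * p ω) • (b ω - c ω)) μ :=
    (hb.sub hc).smul_of_top_right (hp.mul hg)
  rw [integral_add hgAfc hc, integral_mul_smul_sub_eq_of_condExp hm hA hg_meas hg hf hc_meas hc
    hpA hpb, ← integral_add hgpbc hc, ← integral_sub (by exact hgpbc.add hc) hb]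
  exact integral_congr_ae (ae_of_all _ fun ω => by module)

end ConditionalExpectation

section Bounded

variable {Ω : Type*} {m0 : MeasurableSpace Ω} {μ : Measure Ω} {f : Ω → ℝ}

theorem memLp_top_of_ae_mem_Icc {a b : ℝ} (hf : AEStronglyMeasurable f μ)
    (h : ∀ᵐ ω ∂μ, f ω ∈ Set.Icc a b) : MemLp f ⊤ μ :=
  memLp_top_of_bound hf (max |a| |b|) (h.mono fun _ hω => abs_le_max_abs_abs hω.1 hω.2)

theorem memLp_top_inv_of_ae_le {ε : ℝ} (hε : 0 < ε) (hf : AEMeasurable f μ)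
    (h : ∀ᵐ ω ∂μ, ε ≤ f ω) : MemLp (fun ω => (f ω)⁻¹) ⊤ μ :=
  memLp_top_of_bound hf.inv.aestronglyMeasurable ε⁻¹ <| h.mono fun ω hω => by
    rw [Real.norm_eq_abs, abs_of_pos (inv_pos.2 (hε.trans_le hω))]
    exact inv_anti₀ hε hω

end Bounded

theorem abs_inv_mul_sub_one_le {x y ε : ℝ} (hε : 0 < ε) (hy : ε ≤ y) :
    |y⁻¹ * x - 1| ≤ ε⁻¹ * |x - y| := by
  have hy0 : 0 < y := hε.trans_le hy
  rw [show y⁻¹ * x - 1 = y⁻¹ * (x - y) by field_simp, abs_mul, abs_inv, abs_of_pos hy0]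
  gcongr

theorem dr_embedding_product_bias_bound_general
    {Ω : Type*} [MeasurableSpace Ω] (P : Measure Ω) [IsProbabilityMeasure P]
    {𝒳 : Type*} [MeasurableSpace 𝒳]
    {d : ℕ}
    {H : Type*} [NormedAddCommGroup H] [InnerProductSpace ℝ H] [CompleteSpace H]
    -- random elements
    (X : Ω → 𝒳) (A : Ω → ℝ) (Y : Ω → (Fin d → ℝ))
    (hX : Measurable X) (hA : Measurable A)
    (hA01 : ∀ ω, A ω = 0 ∨ A ω = 1)
    -- the propensity score π(X) := E[A | X]
    (π : 𝒳 → ℝ) (hπmeas : Measurable π)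
    (hπ : (fun ω => π (X ω)) =ᵐ[P] P[A | MeasurableSpace.comap X inferInstance])
    -- Condition A3: ε < π(X) < 1 − ε almost surely
    (ε : ℝ) (hε : 0 < ε)
    (hA3 : ∀ᵐ ω ∂P, ε < π (X ω) ∧ π (X ω) < 1 - ε)
    -- Bochner-measurable feature map with E‖ξ(Y)‖ < ∞
    (ξ : (Fin d → ℝ) → H)
    (hξint : Integrable (fun ω => ξ (Y ω)) P)
    -- σ(X)-measurable β with π(X)·β(X) = E[A·ξ(Y) | X] a.s. and E‖β(X)‖² < ∞
    (β : 𝒳 → H) (hβmeas : StronglyMeasurable β)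
    (hβsq : Integrable (fun ω => ‖β (X ω)‖ ^ 2) P)
    (hβ : (fun ω => π (X ω) • β (X ω))
        =ᵐ[P] P[fun ω => A ω • ξ (Y ω) | MeasurableSpace.comap X inferInstance])
    -- measurable nuisance estimates π̂ : 𝒳 → [ε, 1−ε] and β̂ with E‖β̂(X)‖² < ∞
    (πhat : 𝒳 → ℝ) (hπhatmeas : Measurable πhat)
    (hπhatrange : ∀ x, πhat x ∈ Set.Icc ε (1 - ε))
    (βhat : 𝒳 → H) (hβhatmeas : StronglyMeasurable βhat)
    (hβhatsq : Integrable (fun ω => ‖βhat (X ω)‖ ^ 2) P) :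
    ‖(∫ ω, ((A ω / πhat (X ω)) • (ξ (Y ω) - βhat (X ω)) + βhat (X ω)) ∂P)
      - ∫ ω, ((A ω / π (X ω)) • (ξ (Y ω) - β (X ω)) + β (X ω)) ∂P‖
      ≤ (1 / ε) * Real.sqrt (∫ ω, (π (X ω) - πhat (X ω)) ^ 2 ∂P)
          * Real.sqrt (∫ ω, ‖β (X ω) - βhat (X ω)‖ ^ 2 ∂P) := by
  have hm : MeasurableSpace.comap X inferInstance ≤ ‹MeasurableSpace Ω› := hX.comap_le
  have hXm : Measurable[MeasurableSpace.comap X inferInstance] X := comap_measurable X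
  have hA_bdd : MemLp A ⊤ P := memLp_top_of_ae_mem_Icc (a := 0) (b := 1)
    hA.aestronglyMeasurable (ae_of_all _ fun ω => by rcases hA01 ω with h | h <;> simp [h])
  have hπ_bdd : MemLp (fun ω => π (X ω)) ⊤ P :=
    memLp_top_of_ae_mem_Icc (hπmeas.comp hX).aestronglyMeasurable
      (hA3.mono fun _ hω => ⟨hω.1.le, hω.2.le⟩)
  have hπhat_bdd : MemLp (fun ω => πhat (X ω)) ⊤ P :=
    memLp_top_of_ae_mem_Icc (hπhatmeas.comp hX).aestronglyMeasurable
      (ae_of_all _ fun ω => hπhatrange (X ω))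
  have hβ2 : MemLp (fun ω => β (X ω)) 2 P :=
    (memLp_two_iff_integrable_sq_norm (hβmeas.comp_measurable hX).aestronglyMeasurable).2 hβsq
  have hβhat2 : MemLp (fun ω => βhat (X ω)) 2 P :=
    (memLp_two_iff_integrable_sq_norm
      (hβhatmeas.comp_measurable hX).aestronglyMeasurable).2 hβhatsq
  have bias_hat := integral_aipw_sub_integral_eq (g := fun ω => (πhat (X ω))⁻¹)
    (c := fun ω => βhat (X ω)) hm hA_bdd
    (hπhatmeas.inv.comp hXm).stronglyMeasurable
    (memLp_top_inv_of_ae_le hε (hπhatmeas.comp hX).aemeasurable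
      (ae_of_all _ fun ω => (hπhatrange (X ω)).1)) hπ_bdd hξint
    (hβ2.integrable one_le_two) (hβhatmeas.comp_measurable hXm) (hβhat2.integrable one_le_two)
    hπ hβ
  have bias := integral_aipw_sub_integral_eq (g := fun ω => (π (X ω))⁻¹)
    (c := fun ω => β (X ω)) hm hA_bdd (hπmeas.inv.comp hXm).stronglyMeasurable
    (memLp_top_inv_of_ae_le hε (hπmeas.comp hX).aemeasurable
      (hA3.mono fun _ hω => hω.1.le)) hπ_bdd hξint
    (hβ2.integrable one_le_two) (hβmeas.comp_measurable hXm) (hβ2.integrable one_le_two) hπ hβ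
  simp only [sub_self, smul_zero, integral_zero] at bias
  rw [one_div]
  simp only [div_eq_inv_mul]
  rw [← sub_sub_sub_cancel_right _ _ (∫ ω, β (X ω) ∂P), bias_hat, bias, sub_zero]
  exact norm_integral_smul_le_mul_sqrt_mul_sqrt (inv_nonneg.2 hε.le)
    ((hπ_bdd.sub hπhat_bdd).mono_exponent le_top) (hβ2.sub hβhat2)
    (ae_of_all _ fun ω => abs_inv_mul_sub_one_le hε (hπhatrange (X ω)).1)

/-- Product bias bound for the doubly robust embedding:
`‖E[φ̂(Z)] − E[φ(Z)]‖ ≤ (1/ε)·(E[(π(X)−π̂(X))²])^{1/2}·(E[‖β(X)−β̂(X)‖²])^{1/2}`. -/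
theorem dr_embedding_product_bias_bound
    {Ω : Type*} [MeasurableSpace Ω] (P : Measure Ω) [IsProbabilityMeasure P]
    {𝒳 : Type*} [MeasurableSpace 𝒳]
    {d : ℕ}
    {H : Type*} [NormedAddCommGroup H] [InnerProductSpace ℝ H] [CompleteSpace H]
    [TopologicalSpace.SeparableSpace H]
    -- random elements
    (X : Ω → 𝒳) (A : Ω → ℝ) (Y0 Y1 Y : Ω → (Fin d → ℝ))
    (hX : Measurable X) (hA : Measurable A) (hY0 : Measurable Y0) (hY1 : Measurable Y1)
    (hA01 : ∀ ω, A ω = 0 ∨ A ω = 1)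
    -- Condition A1: the observed outcome
    (hA1 : ∀ ω, Y ω = A ω • Y1 ω + (1 - A ω) • Y0 ω)
    -- Condition A2: σ(Y⁰,Y¹) ⟂ σ(A) conditionally on σ(X)
    (hA2 : ∀ s t : Set Ω,
      MeasurableSet[MeasurableSpace.comap (fun ω => (Y0 ω, Y1 ω)) inferInstance] s →
      MeasurableSet[MeasurableSpace.comap A inferInstance] t →
      (P[(s ∩ t).indicator (fun _ => (1 : ℝ)) | MeasurableSpace.comap X inferInstance])
        =ᵐ[P] fun ω =>
          ((P[s.indicator (fun _ => (1 : ℝ)) | MeasurableSpace.comap X inferInstance]) ω) *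
          ((P[t.indicator (fun _ => (1 : ℝ)) | MeasurableSpace.comap X inferInstance]) ω))
    -- the propensity score π(X) := E[A | X]
    (π : 𝒳 → ℝ) (hπmeas : Measurable π)
    (hπ : (fun ω => π (X ω)) =ᵐ[P] P[A | MeasurableSpace.comap X inferInstance])
    -- Condition A3: ε < π(X) < 1 − ε almost surely
    (ε : ℝ) (hε : 0 < ε)
    (hA3 : ∀ᵐ ω ∂P, ε < π (X ω) ∧ π (X ω) < 1 - ε)
    -- Bochner-measurable feature map with E‖ξ(Y)‖ < ∞
    (ξ : (Fin d → ℝ) → H) (hξ : StronglyMeasurable ξ)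
    (hξint : Integrable (fun ω => ξ (Y ω)) P)
    -- σ(X)-measurable β with π(X)·β(X) = E[A·ξ(Y) | X] a.s. and E‖β(X)‖² < ∞
    (β : 𝒳 → H) (hβmeas : StronglyMeasurable β)
    (hβsq : Integrable (fun ω => ‖β (X ω)‖ ^ 2) P)
    (hβ : (fun ω => π (X ω) • β (X ω))
        =ᵐ[P] P[fun ω => A ω • ξ (Y ω) | MeasurableSpace.comap X inferInstance])
    -- measurable nuisance estimates π̂ : 𝒳 → [ε, 1−ε] and β̂ with E‖β̂(X)‖² < ∞
    (πhat : 𝒳 → ℝ) (hπhatmeas : Measurable πhat)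
    (hπhatrange : ∀ x, πhat x ∈ Set.Icc ε (1 - ε))
    (βhat : 𝒳 → H) (hβhatmeas : StronglyMeasurable βhat)
    (hβhatsq : Integrable (fun ω => ‖βhat (X ω)‖ ^ 2) P) :
    ‖(∫ ω, ((A ω / πhat (X ω)) • (ξ (Y ω) - βhat (X ω)) + βhat (X ω)) ∂P)
      - ∫ ω, ((A ω / π (X ω)) • (ξ (Y ω) - β (X ω)) + β (X ω)) ∂P‖
      ≤ (1 / ε) * Real.sqrt (∫ ω, (π (X ω) - πhat (X ω)) ^ 2 ∂P)
          * Real.sqrt (∫ ω, ‖β (X ω) - βhat (X ω)‖ ^ 2 ∂P) :=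
  dr_embedding_product_bias_bound_general P X A Y hX hA hA01 π hπmeas hπ ε hε hA3 ξ hξint β hβmeas
    hβsq hβ πhat hπhatmeas hπhatrange βhat hβhatmeas hβhatsq
end
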